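/- arXiv:0802.2816 — 3 statements merged into one kernel-verified Lean document; each statement's English description precedes it below -/
import Mathlib

section
/- Let $m, c > 0$ and let $f : \mathbb{R} \to \mathbb{R}$ be continuous. If $q : [0,T) \to \mathbb{R}$ is a $C^2$ maximal solution of $m\ddot q = -c\,\dot q/q + m f$ with $q(0) = q_0 > 0$, then $q(t) > 0$ for all $t \in [0,T)$; i.e., the particle governed by the first-order lubrication model never touches the plane in finite time. -/
/-!
Integrating the equation once gives the first integral
`m q' + c log q - m ∫₀ᵘ f = const`, valid as long as `q > 0`. Solving it for `q` expresses
`q = exp ((const - m q' + m ∫₀ᵘ f) / c)` through quantities that stay continuous up to the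
first time `τ` where `q ≤ 0`; letting `u → τ⁻` gives `q τ > 0`, a contradiction.
-/

open Set Real

noncomputable def lubricationEnergy (m c : ℝ) (f q : ℝ → ℝ) (u : ℝ) : ℝ :=
  m * deriv q u + c * log (q u) - m * ∫ s in (0 : ℝ)..u, f s

lemma exists_first_nonpos {q : ℝ → ℝ} {a b : ℝ} (hab : a ≤ b) (hq : ContinuousOn q (Icc a b))
    (hb : q b ≤ 0) : ∃ τ ∈ Icc a b, q τ ≤ 0 ∧ ∀ s ∈ Ico a τ, 0 < q s := by
  set Z := Icc a b ∩ q ⁻¹' Iic 0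
  have hbdd : BddBelow Z := ⟨a, fun x hx => hx.1.1⟩
  obtain ⟨hτab, hτ⟩ : sInf Z ∈ Z :=
    (hq.preimage_isClosed_of_isClosed isClosed_Icc isClosed_Iic).csInf_mem
      ⟨b, ⟨hab, le_rfl⟩, hb⟩ hbdd
  refine ⟨sInf Z, hτab, hτ, fun s hs => ?_⟩
  by_contra! hqs
  exact (csInf_le hbdd ⟨⟨hs.1, hs.2.le.trans hτab.2⟩, hqs⟩).not_gt hs.2

lemma hasDerivAt_lubricationEnergy {m c x : ℝ} {f q : ℝ → ℝ} (hf : Continuous f)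
    (hq : DifferentiableAt ℝ q x) (hq' : DifferentiableAt ℝ (deriv q) x) (hqx : q x ≠ 0)
    (hode : m * deriv (deriv q) x = -c * deriv q x / q x + m * f x) :
    HasDerivAt (lubricationEnergy m c f q) 0 x := by
  have h := ((hq'.hasDerivAt.const_mul m).add
    (((hasDerivAt_log hqx).comp x hq.hasDerivAt).const_mul c)).sub
    ((hf.integral_hasStrictDerivAt 0 x).hasDerivAt.const_mul m)
  have h0 : m * deriv (deriv q) x + c * ((q x)⁻¹ * deriv q x) - m * f x = 0 := by
    rw [hode]
    field_simp
    ring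
  rw [h0] at h
  exact h

lemma lubricationEnergy_eq_const {m c a b : ℝ} {f q : ℝ → ℝ} (hf : Continuous f)
    (hq : ContDiffOn ℝ 2 q (Ioo a b)) (hpos : ∀ s ∈ Ioo a b, 0 < q s)
    (hode : ∀ s ∈ Ioo a b, m * deriv (deriv q) s = -c * deriv q s / q s + m * f s) :
    ∃ K, ∀ s ∈ Ioo a b, lubricationEnergy m c f q s = K := by
  have hq' : ContDiffOn ℝ 1 (deriv q) (Ioo a b) := hq.deriv_of_isOpen isOpen_Ioo (by norm_num)
  have hE : ∀ s ∈ Ioo a b, HasDerivAt (lubricationEnergy m c f q) 0 s := fun s hs =>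
    hasDerivAt_lubricationEnergy hf
      ((hq.differentiableOn (by norm_num)).differentiableAt (isOpen_Ioo.mem_nhds hs))
      ((hq'.differentiableOn one_ne_zero).differentiableAt (isOpen_Ioo.mem_nhds hs))
      (hpos s hs).ne' (hode s hs)
  exact isOpen_Ioo.exists_is_const_of_deriv_eq_zero isPreconnected_Ioo
    (fun s hs => (hE s hs).differentiableAt.differentiableWithinAt) (fun s hs => (hE s hs).deriv)

lemma lubrication_pos_of_pos_on_Ioo {m c a b τ : ℝ} {f q : ℝ → ℝ} (hc : c ≠ 0)
    (hf : Continuous f) (hq : ContDiffOn ℝ 2 q (Ioo a b)) (haτ : a < τ) (hτb : τ < b)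
    (hpos : ∀ s ∈ Ioo a τ, 0 < q s)
    (hode : ∀ s ∈ Ioo a τ, m * deriv (deriv q) s = -c * deriv q s / q s + m * f s) :
    0 < q τ := by
  have hsub : Ioc a τ ⊆ Ioo a b := Ioc_subset_Ioo_right hτb
  obtain ⟨K, hK⟩ :=
    lubricationEnergy_eq_const hf (hq.mono (Ioo_subset_Ioo_right hτb.le)) hpos hode
  set φ := fun u => exp ((K - m * deriv q u + m * ∫ s in (0 : ℝ)..u, f s) / c)
  have hqφ : EqOn q φ (Ioo a τ) := fun s hs => by
    have hlog : log (q s) = (K - m * deriv q s + m * ∫ r in (0 : ℝ)..s, f r) / c := by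
      rw [← hK s hs, lubricationEnergy]
      field_simp
      ring
    simp only [φ]
    rw [← hlog, exp_log (hpos s hs)]
  have hφ : ContinuousOn φ (Ioo a b) :=
    (((continuousOn_const.sub
      ((hq.continuousOn_deriv_of_isOpen isOpen_Ioo (by norm_num)).const_smul m)).add
      ((intervalIntegral.continuous_primitive hf.intervalIntegrable 0).continuousOn.const_smul
        m)).div_const c).rexp
  have hτ := hqφ.of_subset_closure (hq.continuousOn.mono hsub) (hφ.mono hsub)
    Ioo_subset_Ioc_self (by rw [closure_Ioo haτ.ne]; exact Ioc_subset_Icc_self)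
    (right_mem_Ioc.mpr haτ)
  rw [hτ]
  exact exp_pos _

theorem stmt0_general (m c T q0 : ℝ) (hc : 0 < c)
    (f : ℝ → ℝ) (hf : Continuous f) (q : ℝ → ℝ)
    (hq2 : ContDiffOn ℝ 2 q (Set.Ico 0 T))
    (hode : ∀ t ∈ Set.Ico (0:ℝ) T,
      m * deriv (deriv q) t = -c * deriv q t / q t + m * f t)
    (hq0 : q 0 = q0) (hq0pos : 0 < q0) :
    ∀ t ∈ Set.Ico (0:ℝ) T, 0 < q t := by
  intro t ht
  by_contra! hqt
  obtain ⟨τ, hτ, hqτ, hpos⟩ :=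
    exists_first_nonpos ht.1 (hq2.continuousOn.mono (Icc_subset_Ico_right ht.2)) hqt
  have hτ0 : 0 < τ := hτ.1.lt_of_ne (by rintro rfl; linarith)
  have hτT : τ < T := hτ.2.trans_lt ht.2
  have hτpos : 0 < q τ :=
    lubrication_pos_of_pos_on_Ioo hc.ne' hf (hq2.mono Ioo_subset_Ico_self) hτ0 hτT
      (fun s hs => hpos s (Ioo_subset_Ico_self hs))
      (fun s hs => hode s ⟨hs.1.le, hs.2.trans hτT⟩)
  linarith

/-- Lubrication model: a maximal solution of `m q'' = -c q'/q + m f` with `q 0 = q0 > 0`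
never touches the plane in finite time. -/
theorem stmt0 (m c T q0 : ℝ) (hm : 0 < m) (hc : 0 < c) (hT : 0 < T)
    (f : ℝ → ℝ) (hf : Continuous f) (q : ℝ → ℝ)
    (hq2 : ContDiffOn ℝ 2 q (Set.Ico 0 T))
    (hode : ∀ t ∈ Set.Ico (0:ℝ) T,
      m * deriv (deriv q) t = -c * deriv q t / q t + m * f t)
    (hq0 : q 0 = q0) (hq0pos : 0 < q0)
    (hmax : ¬ ∃ (T' : ℝ) (p : ℝ → ℝ), T < T' ∧
      ContDiffOn ℝ 2 p (Set.Ico 0 T') ∧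
      (∀ t ∈ Set.Ico (0:ℝ) T, p t = q t) ∧
      (∀ t ∈ Set.Ico (0:ℝ) T', 0 < p t ∧
        m * deriv (deriv p) t = -c * deriv p t / p t + m * f t)) :
    ∀ t ∈ Set.Ico (0:ℝ) T, 0 < q t :=
  stmt0_general m c T q0 hc f hf q hq2 hode hq0 hq0pos
end

section
/- Consider the discrete gluey scheme: $u^{n+1/2} = u^n + h f^n$, and $u^{n+1}$ is the projection of $u^{n+1/2}$ onto $K(q^n,\gamma^n)$ where $K(q,\gamma) = \{v : q+hv \ge 0\}$ if $\gamma = 0$ and $\{v : q + hv = 0\}$ if $\gamma < 0$, with the unsticking modification replacing $u^{n+1}$ by $\bar\gamma^{n+1}/m$ when $\bar\gamma^{n+1} > 0$. Then for every $n$, $|u^{n+1}| \le |u^0| + \sum_{k=0}^{n} h|f^k|$. In particular, if $h\sum_k |f^k| \le \|f\|_{L^1}$, the discrete velocities are bounded by $|u^0| + \|f\|_{L^1(0,T)}$ uniformly in $h$. -/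
/-!
The state stays complementary: `q ≥ 0`, `γ ≤ 0`, `γ q = 0`, so `0` lies in every admissible set
`K(qⁿ, γⁿ)`. Testing the variational inequality of the projection `ū` of `w = uⁿ + h fⁿ` at
`v = 0` gives `ū (ū - w) ≤ 0` (that is, `ū λ ≤ 0`), hence `|ū| ≤ |w|`. When the scheme
unsticks, `γ̄ = γ - m (ū - w) > 0` with `γ ≤ 0` forces `ū < w`, hence `0 ≤ ū` and
`γ̄ / m ≤ w - ū ≤ |w|`. So `|uⁿ⁺¹| ≤ |uⁿ| + h |fⁿ|` at every step, and the bound telescopes.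
-/

noncomputable section

/-- Discrete set of admissible velocities for the particle/plane gluey scheme. -/
def Kset (q γ h : ℝ) : Set ℝ :=
  if γ = 0 then {v | 0 ≤ q + h * v} else {v | q + h * v = 0}

/-- The particle/plane gluey algorithm: a priori velocity `u n + h f n`, projection onto
`Kset (q n) (γ n) h` giving `ubar (n+1)` and multiplier `lam (n+1)`, update of `γ`
with unsticking modification, and update of the position `q`. -/
structure GlueyScheme (m h : ℝ) where
  q : ℕ → ℝ
  u : ℕ → ℝ
  γ : ℕ → ℝ
  ubar : ℕ → ℝ
  γbar : ℕ → ℝ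
  lam : ℕ → ℝ
  f : ℕ → ℝ
  hm : 0 < m
  hh : 0 < h
  q0pos : 0 < q 0
  γ0 : γ 0 = 0
  lam0 : lam 0 = 0
  proj_mem : ∀ n, ubar (n + 1) ∈ Kset (q n) (γ n) h
  proj_min : ∀ n, ∀ v ∈ Kset (q n) (γ n) h,
    |ubar (n + 1) - (u n + h * f n)| ≤ |v - (u n + h * f n)|
  lam_def : ∀ n, m * (ubar (n + 1) - (u n + h * f n)) = h * lam (n + 1)
  γbar_def : ∀ n, γbar (n + 1) = γ n - h * lam (n + 1)
  unstick_le : ∀ n, γbar (n + 1) ≤ 0 → u (n + 1) = ubar (n + 1) ∧ γ (n + 1) = γbar (n + 1)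
  unstick_gt : ∀ n, 0 < γbar (n + 1) → u (n + 1) = γbar (n + 1) / m ∧ γ (n + 1) = 0
  q_update : ∀ n, q (n + 1) = q n + h * u (n + 1)

open scoped InnerProductSpace

theorem real_inner_sub_sub_nonpos_of_forall_norm_sub_le {F : Type*} [NormedAddCommGroup F]
    [InnerProductSpace ℝ F] {K : Set F} (hK : Convex ℝ K) {p w : F} (hp : p ∈ K)
    (hmin : ∀ v ∈ K, ‖p - w‖ ≤ ‖v - w‖) : ∀ v ∈ K, ⟪w - p, v - p⟫_ℝ ≤ 0 := by
  have : Nonempty K := ⟨⟨p, hp⟩⟩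
  refine (norm_eq_iInf_iff_real_inner_le_zero hK hp).1 (le_antisymm ?_ ?_)
  · exact le_ciInf fun v => by simpa only [norm_sub_rev] using hmin v v.2
  · exact ciInf_le ⟨0, by rintro _ ⟨v, rfl⟩; exact norm_nonneg _⟩ (⟨p, hp⟩ : K)

theorem sub_mul_sub_nonpos_of_forall_abs_sub_le {K : Set ℝ} (hK : Convex ℝ K) {p w : ℝ}
    (hp : p ∈ K) (hmin : ∀ v ∈ K, |p - w| ≤ |v - w|) : ∀ v ∈ K, (w - p) * (v - p) ≤ 0 := by
  simpa only [Real.inner_apply, mul_comm] using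
    real_inner_sub_sub_nonpos_of_forall_norm_sub_le hK hp hmin

theorem abs_le_abs_of_mul_sub_nonpos {p w : ℝ} (h : p * (p - w) ≤ 0) : |p| ≤ |w| := by
  nlinarith [abs_mul_abs_self p, abs_nonneg p, abs_nonneg w, abs_mul p w, le_abs_self (p * w)]

theorem convex_Kset (q γ h : ℝ) : Convex ℝ (Kset q γ h) := by
  intro x hx y hy a b ha hb hab
  have hq : q + h * (a • x + b • y) = a * (q + h * x) + b * (q + h * y) := by
    rw [smul_eq_mul, smul_eq_mul]
    linear_combination (-q) * hab
  unfold Kset at *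
  split_ifs at *
  · simp only [Set.mem_ofPred_eq] at hx hy ⊢
    rw [hq]
    exact add_nonneg (mul_nonneg ha hx) (mul_nonneg hb hy)
  · simp only [Set.mem_ofPred_eq] at hx hy ⊢
    rw [hq, hx, hy, mul_zero, mul_zero, add_zero]

structure IsComplementary (q γ : ℝ) : Prop where
  q_nonneg : 0 ≤ q
  γ_nonpos : γ ≤ 0
  mul_eq_zero : γ * q = 0

theorem zero_mem_Kset {q γ : ℝ} (hs : IsComplementary q γ) (h : ℝ) : (0 : ℝ) ∈ Kset q γ h := by
  unfold Kset
  split_ifs with hγ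
  · simpa using hs.q_nonneg
  · simpa using (mul_eq_zero.mp hs.mul_eq_zero).resolve_left hγ

theorem nonneg_of_mem_Kset {q γ h v : ℝ} (hv : v ∈ Kset q γ h) : 0 ≤ q + h * v := by
  unfold Kset at hv
  split_ifs at hv
  · exact hv
  · exact (Set.mem_ofPred_eq.mp hv).ge

theorem eq_zero_of_mem_Kset {q γ h v : ℝ} (hγ : γ ≠ 0) (hv : v ∈ Kset q γ h) :
    q + h * v = 0 := by
  simpa [Kset, hγ] using hv

theorem neg_div_mem_Kset_zero (q : ℝ) {h : ℝ} (hh : h ≠ 0) : -q / h ∈ Kset q 0 h := by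
  simp [Kset, mul_div_cancel₀ _ hh]

namespace GlueyScheme

variable {m h : ℝ} (S : GlueyScheme m h) (n : ℕ)

theorem γbar_succ_eq :
    S.γbar (n + 1) = S.γ n - m * (S.ubar (n + 1) - (S.u n + h * S.f n)) := by
  rw [S.γbar_def n, S.lam_def n]

theorem sub_ubar_mul_sub_ubar_nonpos :
    ∀ v ∈ Kset (S.q n) (S.γ n) h,
      (S.u n + h * S.f n - S.ubar (n + 1)) * (v - S.ubar (n + 1)) ≤ 0 :=
  sub_mul_sub_nonpos_of_forall_abs_sub_le (convex_Kset _ _ _) (S.proj_mem n) (S.proj_min n)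

theorem ubar_mul_sub_nonpos (hs : IsComplementary (S.q n) (S.γ n)) :
    S.ubar (n + 1) * (S.ubar (n + 1) - (S.u n + h * S.f n)) ≤ 0 := by
  linarith [S.sub_ubar_mul_sub_ubar_nonpos n 0 (zero_mem_Kset hs h)]

theorem q_add_mul_ubar_eq_zero (hγ : S.γ n = 0) (hw : S.u n + h * S.f n < S.ubar (n + 1)) :
    S.q n + h * S.ubar (n + 1) = 0 := by
  have hend := S.sub_ubar_mul_sub_ubar_nonpos n _ (hγ ▸ neg_div_mem_Kset_zero (S.q n) S.hh.ne')
  have hle : S.ubar (n + 1) ≤ -S.q n / h := by nlinarith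
  rw [le_div_iff₀ S.hh] at hle
  linarith [nonneg_of_mem_Kset (S.proj_mem n)]

theorem isComplementary_succ (hs : IsComplementary (S.q n) (S.γ n)) :
    IsComplementary (S.q (n + 1)) (S.γ (n + 1)) := by
  have hγbar := S.γbar_succ_eq n
  have hmem := S.proj_mem n
  rcases le_or_gt (S.γbar (n + 1)) 0 with hle | hpos
  · obtain ⟨hu, hγ⟩ := S.unstick_le n hle
    rw [S.q_update, hu, hγ]
    refine ⟨by linarith [nonneg_of_mem_Kset hmem], hle, ?_⟩
    rcases hle.lt_or_eq with hlt | heq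
    · by_cases hγ0 : S.γ n = 0
      · have hw : S.u n + h * S.f n < S.ubar (n + 1) := by
          rw [hγ0] at hγbar
          nlinarith [S.hm]
        rw [S.q_add_mul_ubar_eq_zero n hγ0 hw, mul_zero]
      · rw [eq_zero_of_mem_Kset hγ0 hmem, mul_zero]
    · rw [heq, zero_mul]
  · obtain ⟨hu, hγ⟩ := S.unstick_gt n hpos
    rw [S.q_update, hu, hγ]
    exact ⟨add_nonneg hs.q_nonneg (mul_nonneg S.hh.le (div_pos hpos S.hm).le), le_rfl, zero_mul _⟩

theorem abs_u_succ_le (hs : IsComplementary (S.q n) (S.γ n)) :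
    |S.u (n + 1)| ≤ |S.u n + h * S.f n| := by
  have hkey := S.ubar_mul_sub_nonpos n hs
  rcases le_or_gt (S.γbar (n + 1)) 0 with hle | hpos
  · rw [(S.unstick_le n hle).1]
    exact abs_le_abs_of_mul_sub_nonpos hkey
  · rw [(S.unstick_gt n hpos).1, abs_of_pos (div_pos hpos S.hm), div_le_iff₀ S.hm]
    set w := S.u n + h * S.f n
    have hγbar : S.γbar (n + 1) ≤ m * (w - S.ubar (n + 1)) := by
      linarith [S.γbar_succ_eq n, hs.γ_nonpos]
    have hlt : S.ubar (n + 1) < w := by nlinarith [S.hm]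
    have hubar : 0 ≤ S.ubar (n + 1) := by nlinarith
    nlinarith [le_abs_self w, S.hm]

theorem isComplementary : ∀ n, IsComplementary (S.q n) (S.γ n)
  | 0 => ⟨S.q0pos.le, S.γ0.le, by rw [S.γ0, zero_mul]⟩
  | n + 1 => S.isComplementary_succ n (isComplementary n)

theorem abs_u_succ_le_abs_add : |S.u (n + 1)| ≤ |S.u n| + h * |S.f n| :=
  calc |S.u (n + 1)| ≤ |S.u n + h * S.f n| := S.abs_u_succ_le n (S.isComplementary n)
    _ ≤ |S.u n| + |h * S.f n| := abs_add_le _ _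
    _ = |S.u n| + h * |S.f n| := by rw [abs_mul, abs_of_pos S.hh]

end GlueyScheme

/-- Uniform bound on the discrete velocities:
`|u^{n+1}| ≤ |u^0| + ∑_{k=0}^{n} h |f^k|`. -/
theorem stmt3 (m h : ℝ) (S : GlueyScheme m h) :
    ∀ n : ℕ, |S.u (n + 1)| ≤ |S.u 0| + ∑ k ∈ Finset.range (n + 1), h * |S.f k| := by
  intro n
  induction n with
  | zero => simpa using S.abs_u_succ_le_abs_add 0
  | succ k ih =>
    rw [Finset.sum_range_succ]
    linarith [S.abs_u_succ_le_abs_add (k + 1)]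
end
end

section
/- In the discrete gluey scheme, the modified Lagrange multiplier $\tilde\lambda^{n+1} := -(\gamma^{n+1}-\gamma^n)/h$ satisfies the discrete Fundamental Principle of Dynamics: $m(u^{n+1}-u^n)/h = m f^n + \tilde\lambda^{n+1}$ for all $n \ge 0$, both in the case without unsticking (where $\tilde\lambda^{n+1} = \lambda^{n+1}$) and in the case with unsticking (where $u^{n+1} = \bar\gamma^{n+1}/m$ and $\gamma^{n+1}=0$). -/
/-!
If `γⁿ = 0`, the admissible set is a half-line and the projection is `max (-qⁿ/h) (uⁿ + h fⁿ)`,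
which lies above the a priori velocity: the multiplier is nonnegative and `γ̄ⁿ⁺¹ ≤ 0`. So
unsticking only happens from a glued state `γⁿ ≠ 0`, in which the particle is on the plane
(`qⁿ = 0`), forcing `ūⁿ⁺¹ = 0`; then `m uⁿ⁺¹ = γ̄ⁿ⁺¹ = γⁿ + m (uⁿ + h fⁿ)` is again the discrete
Fundamental Principle of Dynamics with `γⁿ⁺¹ = 0`.
-/

noncomputable section

lemma eq_max_of_forall_abs_sub_le {a p w : ℝ} (hp : a ≤ p)
    (hmin : ∀ v, a ≤ v → |p - w| ≤ |v - w|) : p = max a w := by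
  have key := hmin (max a w) (le_max_left a w)
  rcases le_total a w with haw | hwa
  · rw [max_eq_right haw, sub_self, abs_zero, abs_nonpos_iff, sub_eq_zero] at key
    rw [max_eq_right haw, key]
  · rw [max_eq_left hwa, abs_of_nonneg (sub_nonneg.2 hwa),
      abs_of_nonneg (sub_nonneg.2 (hwa.trans hp))] at key
    rw [max_eq_left hwa]
    linarith

lemma Kset_of_eq_zero {q γ h : ℝ} (hγ : γ = 0) (hh : 0 < h) :
    Kset q γ h = Set.Ici (-q / h) := by
  ext v
  rw [Kset, if_pos hγ, Set.mem_ofPred_eq, Set.mem_Ici, div_le_iff₀ hh]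
  constructor <;> intro hv <;> linarith

lemma Kset_of_ne_zero {q γ h : ℝ} (hγ : γ ≠ 0) : Kset q γ h = {v | q + h * v = 0} :=
  if_neg hγ

namespace GlueyScheme

variable {m h : ℝ} (S : GlueyScheme m h)

lemma ubar_eq_max_of_γ_eq_zero {n : ℕ} (hγ : S.γ n = 0) :
    S.ubar (n + 1) = max (-S.q n / h) (S.u n + h * S.f n) := by
  have hK := Kset_of_eq_zero (q := S.q n) hγ S.hh
  refine eq_max_of_forall_abs_sub_le ?_ fun v hv => S.proj_min n v ?_
  · simpa only [hK, Set.mem_Ici] using S.proj_mem n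
  · rwa [hK]

lemma lam_nonneg_of_γ_eq_zero {n : ℕ} (hγ : S.γ n = 0) : 0 ≤ S.lam (n + 1) := by
  have hw : S.u n + h * S.f n ≤ S.ubar (n + 1) := by
    rw [S.ubar_eq_max_of_γ_eq_zero hγ]
    exact le_max_right _ _
  have hlam := S.lam_def n
  have : 0 ≤ h * S.lam (n + 1) := by rw [← hlam]; exact mul_nonneg S.hm.le (sub_nonneg.2 hw)
  exact nonneg_of_mul_nonneg_right this S.hh

lemma γbar_nonpos_of_γ_eq_zero {n : ℕ} (hγ : S.γ n = 0) : S.γbar (n + 1) ≤ 0 := by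
  have := S.lam_nonneg_of_γ_eq_zero hγ
  rw [S.γbar_def n, hγ]
  nlinarith [S.hh]

lemma q_add_mul_ubar_eq_zero_of_lam_pos {n : ℕ} (hγ : S.γ n = 0) (hlam : 0 < S.lam (n + 1)) :
    S.q n + h * S.ubar (n + 1) = 0 := by
  have hw : S.u n + h * S.f n < S.ubar (n + 1) := by
    have := S.lam_def n
    by_contra! hle
    nlinarith [S.hm, S.hh]
  rw [S.ubar_eq_max_of_γ_eq_zero hγ] at hw ⊢
  have hwa : S.u n + h * S.f n < -S.q n / h := by simpa using hw
  rw [max_eq_left hwa.le, mul_div_cancel₀ _ S.hh.ne']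
  ring

lemma q_succ_eq_zero_of_γ_succ_ne_zero {n : ℕ} (hγ : S.γ (n + 1) ≠ 0) : S.q (n + 1) = 0 := by
  have hle : S.γbar (n + 1) ≤ 0 := by
    by_contra! hgt
    exact hγ (S.unstick_gt n hgt).2
  obtain ⟨hu, hγbar⟩ := S.unstick_le n hle
  rw [S.q_update n, hu]
  by_cases hγn : S.γ n = 0
  · refine S.q_add_mul_ubar_eq_zero_of_lam_pos hγn ?_
    have hlt : S.γbar (n + 1) < 0 := lt_of_le_of_ne hle (hγbar ▸ hγ)
    rw [S.γbar_def n, hγn] at hlt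
    nlinarith [S.hh]
  · simpa only [Kset_of_ne_zero hγn, Set.mem_ofPred_eq] using S.proj_mem n

lemma q_eq_zero_of_γ_ne_zero : ∀ {n : ℕ}, S.γ n ≠ 0 → S.q n = 0
  | 0, hγ => absurd S.γ0 hγ
  | _ + 1, hγ => S.q_succ_eq_zero_of_γ_succ_ne_zero hγ

lemma ubar_eq_zero_of_γ_ne_zero {n : ℕ} (hγ : S.γ n ≠ 0) : S.ubar (n + 1) = 0 := by
  have hmem := S.proj_mem n
  rw [Kset_of_ne_zero hγ, Set.mem_ofPred_eq, S.q_eq_zero_of_γ_ne_zero hγ, zero_add] at hmem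
  exact (mul_eq_zero.1 hmem).resolve_left S.hh.ne'

lemma momentum_balance (n : ℕ) :
    m * (S.u (n + 1) - S.u n) = h * (m * S.f n) - (S.γ (n + 1) - S.γ n) := by
  rcases le_or_gt (S.γbar (n + 1)) 0 with hle | hgt
  · obtain ⟨hu, hγ⟩ := S.unstick_le n hle
    rw [hu, hγ, S.γbar_def n]
    linear_combination S.lam_def n
  · obtain ⟨hu, hγ⟩ := S.unstick_gt n hgt
    have hγn : S.γ n ≠ 0 := fun h0 => (S.γbar_nonpos_of_γ_eq_zero h0).not_gt hgt
    have hmu : m * S.u (n + 1) = S.γbar (n + 1) := by rw [hu, mul_div_cancel₀ _ S.hm.ne']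
    have hlam := S.lam_def n
    rw [S.ubar_eq_zero_of_γ_ne_zero hγn] at hlam
    rw [hγ]
    linear_combination hmu + S.γbar_def n + hlam

end GlueyScheme

/-- Discrete Fundamental Principle of Dynamics: with the modified multiplier
`λ̃^{n+1} = -(γ^{n+1} - γ^n)/h`, one has `m (u^{n+1} - u^n)/h = m f^n + λ̃^{n+1}`
for all `n`, in both the unsticking and non-unsticking cases. -/
theorem stmt4 (m h : ℝ) (S : GlueyScheme m h) :
    ∀ n : ℕ,
      m * (S.u (n + 1) - S.u n) / h = m * S.f n + (-(S.γ (n + 1) - S.γ n) / h) ∧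
      (S.γbar (n + 1) ≤ 0 → -(S.γ (n + 1) - S.γ n) / h = S.lam (n + 1)) := by
  intro n
  have hh := S.hh.ne'
  refine ⟨?_, fun hle => ?_⟩
  · field_simp
    linear_combination S.momentum_balance n
  · rw [(S.unstick_le n hle).2, S.γbar_def n]
    field_simp
    ring

end
end
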